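/- arXiv:1805.02349 — 2 statements merged into one kernel-verified Lean document; each statement's English description precedes it below -/
import Mathlib

section
/- Let H be a graph on v vertices with no non-trivial automorphisms, and let J be a graph obtained from H by removing ℓ edges (keeping all vertices). Then J has at most v^{2ℓ} automorphisms. -/
/-- If `H` is a graph on `v` vertices with no non-trivial automorphisms and `J` is obtained
from `H` by removing `ℓ` edges (keeping all vertices), then `J` has at most `v ^ (2ℓ)`
automorphisms. -/
theorem stmt2 {V : Type*} [Fintype V] (H J : SimpleGraph V) (ℓ : ℕ)
    (hle : J ≤ H) (hremoved : (H.edgeSet \ J.edgeSet).ncard = ℓ)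
    (htriv : Subsingleton (H ≃g H)) :
    Nat.card (J ≃g J) ≤ (Fintype.card V) ^ (2 * ℓ) := by
  classical
  set D : Set (Sym2 V) := H.edgeSet \ J.edgeSet with hD
  set S : Set V := {x | ∃ e ∈ D, x ∈ e} with hS
  -- membership characterization
  have hmem : ∀ a b : V, H.Adj a b ↔ J.Adj a b ∨ s(a, b) ∈ D := by
    intro a b
    constructor
    · intro h
      by_cases hJ : J.Adj a b
      · exact Or.inl hJ
      · exact Or.inr ⟨by simpa using h, by simpa using hJ⟩
    · rintro (h | h)
      · exact hle h
      · simpa using h.1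
  -- cardinality bound on S
  have hScard : S.ncard ≤ 2 * ℓ := by
    have hDfin : D.Finite := Set.toFinite D
    set Df : Finset (Sym2 V) := hDfin.toFinset with hDf
    set f : Sym2 V → Finset V := fun e => Finset.univ.filter (· ∈ e) with hf
    have hsub : S ⊆ ↑(Df.biUnion f) := by
      rintro x ⟨e, heD, hxe⟩
      simp only [Finset.coe_biUnion, Set.mem_iUnion]
      exact ⟨e, by simpa [hDf] using heD, by simp [hf, hxe]⟩
    have hcard : (Df.biUnion f).card ≤ 2 * ℓ := by
      calc (Df.biUnion f).card ≤ ∑ e ∈ Df, (f e).card := Finset.card_biUnion_le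
        _ ≤ ∑ _e ∈ Df, 2 := by
            apply Finset.sum_le_sum
            intro e _
            induction e with
            | h a b =>
              have : f s(a, b) ⊆ {a, b} := by
                intro x hx
                simp only [hf, Finset.mem_filter] at hx
                rcases Sym2.mem_iff.mp hx.2 with h | h <;> simp [h]
              calc (f s(a,b)).card ≤ ({a, b} : Finset V).card := Finset.card_le_card this
                _ ≤ 2 := Finset.card_insert_le _ _ |>.trans (by simp)
        _ = 2 * ℓ := by
            rw [Finset.sum_const, smul_eq_mul]
            have : Df.card = ℓ := by
              rw [hDf, Set.Finite.card_toFinset, ← Nat.card_eq_fintype_card,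
                Nat.card_coe_set_eq, hremoved]
            rw [this, mul_comm]
    calc S.ncard ≤ (↑(Df.biUnion f) : Set V).ncard :=
          Set.ncard_le_ncard hsub (Set.toFinite _)
      _ = (Df.biUnion f).card := Set.ncard_coe_finset _
      _ ≤ 2 * ℓ := hcard
  -- the restriction map is injective
  have hinj : Function.Injective (fun (φ : J ≃g J) => (fun x : S => φ x)) := by
    intro φ ψ h
    have hfix : ∀ x ∈ S, φ x = ψ x := fun x hx => congrFun h ⟨x, hx⟩
    set σ : J ≃g J := φ.trans ψ.symm with hσ
    have hσfix : ∀ x ∈ S, σ x = x := by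
      intro x hx
      simp only [hσ, RelIso.trans_apply]
      rw [hfix x hx]
      exact ψ.symm_apply_apply x
    have hSm : ∀ a b : V, s(a, b) ∈ D → a ∈ S ∧ b ∈ S := by
      intro a b hab
      exact ⟨⟨s(a, b), hab, by simp⟩, ⟨s(a, b), hab, by simp⟩⟩
    have hfixpt : ∀ a : V, σ a ∈ S → σ a = a := by
      intro a ha
      have h1 : σ (σ a) = σ a := hσfix (σ a) ha
      exact σ.injective h1
    have hadj : ∀ a b : V, H.Adj (σ a) (σ b) ↔ H.Adj a b := by
      intro a b
      constructor
      · intro h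
        rcases (hmem _ _).1 h with hJ | hd
        · exact hle (σ.map_rel_iff.mp hJ)
        · obtain ⟨ha, hb⟩ := hSm _ _ hd
          rw [hfixpt a ha, hfixpt b hb] at hd
          exact (hmem a b).2 (Or.inr hd)
      · intro h
        rcases (hmem _ _).1 h with hJ | hd
        · exact hle (σ.map_rel_iff.mpr hJ)
        · obtain ⟨ha, hb⟩ := hSm _ _ hd
          rw [hσfix a ha, hσfix b hb]
          exact (hmem a b).2 (Or.inr hd)
    set τ : H ≃g H := ⟨σ.toEquiv, @fun a b => hadj a b⟩ with hτ
    have hτid : τ = RelIso.refl H.Adj := Subsingleton.elim _ _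
    have hσid : ∀ x, σ x = x := by
      intro x
      have : τ x = x := by rw [hτid]; rfl
      exact this
    apply RelIso.ext
    intro x
    have := hσid x
    simp only [hσ, RelIso.trans_apply] at this
    calc φ x = ψ (ψ.symm (φ x)) := (ψ.apply_symm_apply _).symm
      _ = ψ x := by rw [this]
  -- counting
  haveI : Finite (S → V) := inferInstance
  calc Nat.card (J ≃g J) ≤ Nat.card (S → V) :=
        Nat.card_le_card_of_injective _ hinj
    _ = Fintype.card V ^ S.ncard := by
        rw [Nat.card_fun, Nat.card_eq_fintype_card, Nat.card_coe_set_eq]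
    _ ≤ Fintype.card V ^ (2 * ℓ) := by
        by_cases hV : Fintype.card V = 0
        · haveI : IsEmpty V := Fintype.card_eq_zero_iff.mp hV
          have hS0 : S.ncard = 0 := by simp [Set.eq_empty_of_isEmpty S]
          have hl0 : ℓ = 0 := by
            rw [← hremoved]
            simp [Set.eq_empty_of_isEmpty D]
          rw [hS0, hl0]
        · exact Nat.pow_le_pow_right (Nat.pos_of_ne_zero hV) hScard
end

section
/- Let A be a graph with edge density α = |E(A)|/|V(A)| and let B be a strictly balanced graph with density β = |E(B)|/|V(B)| ≤ α. If J is a nonempty proper subgraph of both A and B, and A ∪_J B is the graph formed by gluing A and B along J (identifying the vertices and edges of the two copies of J), then A ∪_J B has density strictly larger than β. -/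
/-- Gluing a graph `A` of density `α` and a strictly balanced graph `B` of density `β ≤ α`
along a common nonempty proper subgraph `J` produces a graph of density strictly larger
than `β`.  The glued graph `A ∪_J B` has `|V(A)| + |V(B)| − |V(J)|` vertices and
`|E(A)| + |E(B)| − |E(J)|` edges. -/
theorem stmt3 {VA VB : Type*} [Fintype VA] [Fintype VB]
    (A : SimpleGraph VA) (B : SimpleGraph VB) (α β : ℚ)
    (hα : α = (A.edgeSet.ncard : ℚ) / (Fintype.card VA : ℚ))
    (hβ : β = (B.edgeSet.ncard : ℚ) / (Fintype.card VB : ℚ))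
    (hβα : β ≤ α)
    (hbal : ∀ K : B.Subgraph, K ≠ ⊤ → K.verts.Nonempty →
      (K.edgeSet.ncard : ℚ) / (K.verts.ncard : ℚ) < β)
    (JA : A.Subgraph) (JB : B.Subgraph)
    (hJA : JA ≠ ⊤) (hJB : JB ≠ ⊤) (hne : JB.verts.Nonempty)
    (hiso : Nonempty (JA.coe ≃g JB.coe)) :
    β < ((A.edgeSet.ncard : ℚ) + (B.edgeSet.ncard : ℚ) - (JB.edgeSet.ncard : ℚ)) /
        ((Fintype.card VA : ℚ) + (Fintype.card VB : ℚ) - (JB.verts.ncard : ℚ)) := by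
  have hJlt : (JB.edgeSet.ncard : ℚ) / (JB.verts.ncard : ℚ) < β := hbal JB hJB hne
  have vJpos : 0 < (JB.verts.ncard : ℚ) := by
    have : 0 < JB.verts.ncard := (Set.ncard_pos (Set.toFinite _)).mpr hne
    exact_mod_cast this
  have βpos : 0 < β :=
    lt_of_le_of_lt (div_nonneg (by positivity) (by positivity)) hJlt
  have hvJB : (JB.verts.ncard : ℚ) ≤ (Fintype.card VB : ℚ) := by
    have : JB.verts.ncard ≤ Fintype.card VB := by
      have := Set.ncard_le_ncard (Set.subset_univ JB.verts) Set.finite_univ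
      simpa [Set.ncard_univ, Nat.card_eq_fintype_card] using this
    exact_mod_cast this
  have vBpos : 0 < (Fintype.card VB : ℚ) := lt_of_lt_of_le vJpos hvJB
  have vApos : 0 < (Fintype.card VA : ℚ) := by
    rcases Nat.eq_zero_or_pos (Fintype.card VA) with h | h
    · exfalso
      rw [h] at hα
      simp at hα
      linarith [hβα, βpos, hα]
    · exact_mod_cast h
  have heJ : (JB.edgeSet.ncard : ℚ) < β * (JB.verts.ncard : ℚ) :=
    (div_lt_iff₀ vJpos).mp hJlt
  have heB : (B.edgeSet.ncard : ℚ) = β * (Fintype.card VB : ℚ) := by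
    rw [hβ]; field_simp
  have heA : β * (Fintype.card VA : ℚ) ≤ (A.edgeSet.ncard : ℚ) := by
    have : β ≤ (A.edgeSet.ncard : ℚ) / (Fintype.card VA : ℚ) := hβα.trans_eq hα
    exact (le_div_iff₀ vApos).mp this
  have Dpos : 0 < (Fintype.card VA : ℚ) + (Fintype.card VB : ℚ) - (JB.verts.ncard : ℚ) := by
    linarith
  rw [lt_div_iff₀ Dpos]
  nlinarith
end
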